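/- For every integer N ≥ 2 and every x ∈ (N/(N+1), 1], the expected winning probability of a player choosing x against N-1 opponents playing f_* satisfies (1-x) · U_*(x)^{N-1} + (x/N) · V_*^{N-1} = 1 - (1 - 1/N^2) x, and this quantity is strictly less than 1/N. -/

import Mathlib

open Real MeasureTheory

/-- The Nash-equilibrium density of the `N`-player elimination game. -/
noncomputable def fstar (N : ℕ) (x : ℝ) : ℝ :=
  if x ≤ (N:ℝ)/((N:ℝ)+1) then
    (N:ℝ) ^ (-(2:ℝ)/((N:ℝ)-1)) /
      ((1-x) ^ ((3:ℝ) - ((N:ℝ)-2)/((N:ℝ)-1)) * ((N:ℝ)-x) ^ (((N:ℝ)-2)/((N:ℝ)-1)))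
  else 0

/-- `U_*(x) = ∫_0^x (1-s) f_*(s) ds + ∫_0^1 s f_*(s) ds`. -/
noncomputable def Ustar (N : ℕ) (x : ℝ) : ℝ :=
  (∫ s in (0:ℝ)..x, (1-s) * fstar N s) + ∫ s in (0:ℝ)..1, s * fstar N s

/-- `V_* = ∫_0^1 s f_*(s) ds`. -/
noncomputable def Vstar (N : ℕ) : ℝ := ∫ s in (0:ℝ)..1, s * fstar N s

/-!
Write `p = 1/(N-1)` and `r(s) = (N-s)/(1-s)`. On its support `[0, N/(N+1)]` the density is
`f_*(s) = N^{-2p} r(s)^{p-1} / (1-s)^3`, and since `r' = (N-1)/(1-s)^2`, the functions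
`N^{-2p} r^p` and `N^{-2p} ((N+1)s - N)/(N(1-s)) r^p` are antiderivatives of `(1-s) f_*` and
`s f_*`. The second vanishes at `N/(N+1)`, where `r = N²`, so `V_* = N^{-p}` and, for
`x ≥ N/(N+1)`, `U_*(x) = (1 - N^{-p}) + N^{-p} = 1`. Hence `V_*^{N-1} = 1/N`, the payoff is
`(1-x) + x/N²`, and it drops below `1/N` exactly when `x > N/(N+1)`.
-/

section
variable {n p s : ℝ}

theorem hasDerivAt_ratio_rpow (hn : 1 < n) (hp : p * (n - 1) = 1) (hs : s < 1) :
    HasDerivAt (fun t => ((n - t) / (1 - t)) ^ p)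
      (((n - s) / (1 - s)) ^ (p - 1) / (1 - s) ^ 2) s := by
  have h1s : 1 - s ≠ 0 := by linarith
  have hr : HasDerivAt (fun t => (n - t) / (1 - t)) ((n - 1) / (1 - s) ^ 2) s :=
    (((hasDerivAt_id s).const_sub n).div ((hasDerivAt_id s).const_sub 1) h1s).congr_deriv
      (by simp)
  refine (hr.rpow_const (p := p) (Or.inl (div_pos (by linarith) (by linarith)).ne')).congr_deriv ?_
  linear_combination (((n - s) / (1 - s)) ^ (p - 1) / (1 - s) ^ 2) * hp

theorem hasDerivAt_mul_ratio_rpow (hn : 1 < n) (hp : p * (n - 1) = 1) (hs : s < 1) :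
    HasDerivAt (fun t => ((n + 1) * t - n) / (n * (1 - t)) * ((n - t) / (1 - t)) ^ p)
      (s * ((n - s) / (1 - s)) ^ (p - 1) / (1 - s) ^ 3) s := by
  have h1s : 1 - s ≠ 0 := by linarith
  have hn0 : n ≠ 0 := by linarith
  have hr : (n - s) / (1 - s) ≠ 0 := (div_pos (by linarith) (by linarith)).ne'
  have hq : HasDerivAt (fun t => ((n + 1) * t - n) / (n * (1 - t))) (1 / (n * (1 - s) ^ 2)) s :=
    ((((hasDerivAt_id s).const_mul (n + 1)).sub_const n).div
      (((hasDerivAt_id s).const_sub 1).const_mul n) (mul_ne_zero hn0 h1s)).congr_deriv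
      (by simp only [id]; field_simp; ring)
  refine (hq.mul (hasDerivAt_ratio_rpow hn hp hs)).congr_deriv ?_
  rw [show p = (p - 1) + 1 by ring, rpow_add_one hr, add_sub_cancel_right]
  field_simp
  ring

theorem div_add_one_lt_one (hn : 0 ≤ n) : n / (n + 1) < 1 :=
  (div_lt_one (by positivity)).2 (by linarith)

theorem ratio_div_add_one_eq_sq (hn : 0 ≤ n) :
    (n - n / (n + 1)) / (1 - n / (n + 1)) = n ^ 2 := by
  have : n + 1 ≠ 0 := by positivity
  field_simp
  ring

theorem one_sub_mul_lt_one_div {x : ℝ} (hn : 1 < n) (hx : n / (n + 1) < x) :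
    1 - (1 - 1 / n ^ 2) * x < 1 / n := by
  rw [div_lt_iff₀ (by linarith)] at hx
  have hn0 : 0 < n := by linarith
  have hgap : 1 / n - (1 - (1 - 1 / n ^ 2) * x) = (n - 1) * (x * (n + 1) - n) / n ^ 2 := by
    field_simp
    ring
  rw [← sub_pos, hgap]
  exact div_pos (mul_pos (by linarith) (by linarith)) (by positivity)

end

theorem intervalIntegral_eq_of_eqOn_zero_Ioc {f : ℝ → ℝ} {a b c : ℝ} (hbc : b ≤ c)
    (hf : IntervalIntegrable f volume a b) (h0 : Set.EqOn f 0 (Set.Ioc b c)) :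
    ∫ x in a..c, f x = ∫ x in a..b, f x := by
  have htail : IntervalIntegrable f volume b c :=
    (intervalIntegrable_iff_integrableOn_Ioc_of_le hbc).2
      (integrableOn_zero.congr_fun h0.symm measurableSet_Ioc)
  rw [← intervalIntegral.integral_add_adjacent_intervals hf htail,
    intervalIntegral.integral_of_le hbc, setIntegral_congr_fun measurableSet_Ioc h0]
  simp

-- `p = 1 - b`, so that the exponents in `fstar` are `3 - b = p + 2` and `b = 1 - p`.
noncomputable def fstarExp (N : ℕ) : ℝ := 1 / ((N : ℝ) - 1)

section
variable {N : ℕ}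

theorem fstarExp_mul_sub_one (hN : 2 ≤ N) : fstarExp N * ((N : ℝ) - 1) = 1 := by
  have : (N : ℝ) - 1 ≠ 0 := by
    have : (2 : ℝ) ≤ N := by exact_mod_cast hN
    linarith
  simp [fstarExp, this]

theorem fstar_eq_of_le (hN : 2 ≤ N) {s : ℝ} (hs : s ≤ (N : ℝ) / ((N : ℝ) + 1)) :
    fstar N s = (N : ℝ) ^ (-2 * fstarExp N) *
      (((N : ℝ) - s) / (1 - s)) ^ (fstarExp N - 1) / (1 - s) ^ 3 := by
  have hN' : (2 : ℝ) ≤ N := by exact_mod_cast hN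
  have hs1 := hs.trans_lt (div_add_one_lt_one N.cast_nonneg)
  have h1s : 0 < 1 - s := by linarith
  have hNs : 0 < (N : ℝ) - s := by linarith
  have hN1 : (N : ℝ) - 1 ≠ 0 := by linarith
  have e1 : (3 : ℝ) - ((N : ℝ) - 2) / ((N : ℝ) - 1) = (3 : ℕ) + (fstarExp N - 1) := by
    simp only [fstarExp]; field_simp; ring
  have e2 : ((N : ℝ) - 2) / ((N : ℝ) - 1) = -(fstarExp N - 1) := by
    simp only [fstarExp]; field_simp; ring
  have e3 : -(2 : ℝ) / ((N : ℝ) - 1) = -2 * fstarExp N := by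
    simp only [fstarExp]; ring
  rw [fstar, if_pos hs, e1, e2, e3, rpow_add h1s, rpow_natCast, rpow_neg hNs.le,
    div_rpow hNs.le h1s.le]
  field_simp

theorem fstar_eq_zero_of_lt {s : ℝ} (hs : (N : ℝ) / ((N : ℝ) + 1) < s) : fstar N s = 0 :=
  if_neg (not_le.2 hs)

theorem continuousOn_fstar (hN : 2 ≤ N) :
    ContinuousOn (fstar N) (Set.Iic ((N : ℝ) / ((N : ℝ) + 1))) := by
  have hN' : (2 : ℝ) ≤ N := by exact_mod_cast hN
  have h1s : ∀ s ∈ Set.Iic ((N : ℝ) / ((N : ℝ) + 1)), 0 < 1 - s := fun s hs => by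
    linarith [div_add_one_lt_one (N.cast_nonneg : (0 : ℝ) ≤ N), Set.mem_Iic.1 hs]
  refine ContinuousOn.congr ?_ fun s hs => fstar_eq_of_le hN hs
  refine ContinuousOn.div (continuousOn_const.mul (ContinuousOn.rpow_const ?_ ?_))
    (by fun_prop) fun s hs => (pow_pos (h1s s hs) 3).ne'
  · exact ContinuousOn.div (by fun_prop) (by fun_prop) fun s hs => (h1s s hs).ne'
  · intro s hs
    have := h1s s hs
    exact Or.inl (div_pos (by linarith) this).ne'

theorem integral_mul_fstar_eq_sub (hN : 2 ≤ N) {g Φ : ℝ → ℝ} {y : ℝ}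
    (hy : (N : ℝ) / ((N : ℝ) + 1) ≤ y) (hg : Continuous g)
    (hΦ : ∀ s ≤ (N : ℝ) / ((N : ℝ) + 1), HasDerivAt Φ (g s * fstar N s) s) :
    ∫ s in (0 : ℝ)..y, g s * fstar N s = Φ ((N : ℝ) / ((N : ℝ) + 1)) - Φ 0 := by
  have hIcc : Set.uIcc 0 ((N : ℝ) / ((N : ℝ) + 1)) ⊆ Set.Iic ((N : ℝ) / ((N : ℝ) + 1)) := by
    rw [Set.uIcc_of_le (by positivity)]
    exact Set.Icc_subset_Iic_self
  have hint : IntervalIntegrable (fun s => g s * fstar N s) volume 0 ((N : ℝ) / ((N : ℝ) + 1)) :=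
    (hg.continuousOn.mul ((continuousOn_fstar hN).mono hIcc)).intervalIntegrable
  rw [intervalIntegral_eq_of_eqOn_zero_Ioc hy hint fun s hs => by
      simp [fstar_eq_zero_of_lt hs.1]]
  exact intervalIntegral.integral_eq_sub_of_hasDerivAt (fun s hs => hΦ s (hIcc hs)) hint

theorem integral_one_sub_mul_fstar (hN : 2 ≤ N) {y : ℝ} (hy : (N : ℝ) / ((N : ℝ) + 1) ≤ y) :
    ∫ s in (0 : ℝ)..y, (1 - s) * fstar N s = 1 - (N : ℝ) ^ (-fstarExp N) := by
  have hN' : (1 : ℝ) < N := by exact_mod_cast hN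
  have hN0 : (0 : ℝ) < N := by linarith
  rw [integral_mul_fstar_eq_sub hN hy (by fun_prop)
    (Φ := fun t => (N : ℝ) ^ (-2 * fstarExp N) * (((N : ℝ) - t) / (1 - t)) ^ fstarExp N)]
  · have hsq : ((N : ℝ) ^ 2) ^ fstarExp N = (N : ℝ) ^ (2 * fstarExp N) := by
      rw [← rpow_natCast, ← rpow_mul hN0.le]
      norm_num
    simp only [sub_zero, div_one, ratio_div_add_one_eq_sq hN0.le, hsq, ← rpow_add hN0]
    norm_num
    ring_nf
  · intro s hs
    have hs1 : s < 1 := hs.trans_lt (div_add_one_lt_one hN0.le)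
    refine ((hasDerivAt_ratio_rpow hN' (fstarExp_mul_sub_one hN) hs1).const_mul _).congr_deriv ?_
    rw [fstar_eq_of_le hN hs]
    field_simp [(sub_pos.2 hs1).ne']

theorem integral_mul_fstar (hN : 2 ≤ N) {y : ℝ} (hy : (N : ℝ) / ((N : ℝ) + 1) ≤ y) :
    ∫ s in (0 : ℝ)..y, s * fstar N s = (N : ℝ) ^ (-fstarExp N) := by
  have hN' : (1 : ℝ) < N := by exact_mod_cast hN
  have hN0 : (0 : ℝ) < N := by linarith
  rw [integral_mul_fstar_eq_sub hN hy (by fun_prop)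
    (Φ := fun t => (N : ℝ) ^ (-2 * fstarExp N) *
      (((N + 1) * t - N) / (N * (1 - t)) * (((N : ℝ) - t) / (1 - t)) ^ fstarExp N))]
  · have hzero : ((N : ℝ) + 1) * ((N : ℝ) / ((N : ℝ) + 1)) - N = 0 := by
      field_simp
      ring
    have hpow : (N : ℝ) ^ (-2 * fstarExp N) * (N : ℝ) ^ fstarExp N
        = (N : ℝ) ^ (-fstarExp N) := by
      rw [← rpow_add hN0]
      ring_nf
    simp only [hzero, zero_div, zero_mul, mul_zero, sub_zero, div_one, zero_sub]
    rw [← hpow]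
    field_simp
  · intro s hs
    have hs1 : s < 1 := hs.trans_lt (div_add_one_lt_one hN0.le)
    refine ((hasDerivAt_mul_ratio_rpow hN' (fstarExp_mul_sub_one hN) hs1).const_mul _).congr_deriv ?_
    rw [fstar_eq_of_le hN hs]
    field_simp [(sub_pos.2 hs1).ne']

theorem Vstar_eq (hN : 2 ≤ N) : Vstar N = (N : ℝ) ^ (-fstarExp N) :=
  integral_mul_fstar hN (div_add_one_lt_one N.cast_nonneg).le

theorem Ustar_eq_one (hN : 2 ≤ N) {x : ℝ} (hx : (N : ℝ) / ((N : ℝ) + 1) ≤ x) :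
    Ustar N x = 1 := by
  rw [Ustar, integral_one_sub_mul_fstar hN hx, ← Vstar, Vstar_eq hN, sub_add_cancel]

theorem Vstar_pow_eq (hN : 2 ≤ N) : Vstar N ^ (N - 1) = 1 / (N : ℝ) := by
  have hN0 : (0 : ℝ) < N := by positivity
  rw [Vstar_eq hN, ← rpow_natCast, ← rpow_mul hN0.le, Nat.cast_sub (by omega), Nat.cast_one,
    neg_mul, fstarExp_mul_sub_one hN, rpow_neg_one, one_div]

end

/-- for `N ≥ 2` and `x ∈ (N/(N+1), 1]`, the expected winning
probability of a deviator equals `1 - (1 - 1/N²) x`, which is strictly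
less than `1/N`. -/
theorem losing_above_support (N : ℕ) (hN : 2 ≤ N)
    (x : ℝ) (hx : x ∈ Set.Ioc ((N:ℝ)/((N:ℝ)+1)) 1) :
    (1-x) * (Ustar N x) ^ (N-1) + (x/(N:ℝ)) * (Vstar N) ^ (N-1)
      = 1 - (1 - 1/(N:ℝ)^2) * x ∧
    (1-x) * (Ustar N x) ^ (N-1) + (x/(N:ℝ)) * (Vstar N) ^ (N-1) < 1/(N:ℝ) := by
  have hN0 : (N : ℝ) ≠ 0 := by positivity
  have hvalue : (1-x) * (Ustar N x) ^ (N-1) + (x/(N:ℝ)) * (Vstar N) ^ (N-1)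
      = 1 - (1 - 1/(N:ℝ)^2) * x := by
    rw [Ustar_eq_one hN hx.1.le, Vstar_pow_eq hN, one_pow]
    field_simp
    ring
  exact ⟨hvalue, hvalue ▸ one_sub_mul_lt_one_div (by exact_mod_cast hN) hx.1⟩
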